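/- Let X be a Banach space with two decompositions X = U ⊕ W and X = U' ⊕ W' into closed subspaces. Let L : U → W be a continuous linear map and suppose that the graph G(L) := {u + L(u) : u ∈ U} satisfies X = G(L) ⊕ W'. Then the map T := P_{U'⊕W'} ∘ (id + L) : U → U' (sending u to the U'-component of u + L(u)) is a continuous linear bijection, and the chart image Ψ_{U'⊕W'}(G(L)) := P_{W'⊕U'}|_{G(L)} ∘ (P_{U'⊕W'}|_{G(L)})⁻¹ ∈ 𝓛(U',W') satisfies Ψ_{U'⊕W'}(G(L))(T(u)) = P_{W'⊕U'}(u + L(u)) for all u ∈ U; equivalently, Ψ_{U'⊕W'}(G(L)) = P_{W'⊕U'} ∘ (id + L) ∘ (P_{U'⊕W'} ∘ (id + L))⁻¹ as maps U' → W'. -/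
import Mathlib


/-- The graph `G(L) = {u + L u : u ∈ U}` of a continuous linear map `L : U → W`,
as a subspace of `X`. -/
noncomputable def graphSub {X : Type*} [NormedAddCommGroup X] [NormedSpace ℝ X]
    (U W : Submodule ℝ X) (L : U →L[ℝ] W) : Submodule ℝ X :=
  LinearMap.range (U.subtype + W.subtype ∘ₗ (L : U →ₗ[ℝ] W))

/-- The map `T = P_{U'⊕W'} ∘ (id + L) : U → U'`, sending `u` to the `U'`-component of
`u + L u` in the decomposition `X = U' ⊕ W'`, where `P'` is the continuous projection
onto `U'` along `W'`. -/
noncomputable def overlapT {X : Type*} [NormedAddCommGroup X] [NormedSpace ℝ X]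
    (U W U' : Submodule ℝ X) (P' : X →L[ℝ] X)
    (hP'r : LinearMap.range (P' : X →ₗ[ℝ] X) = U') (L : U →L[ℝ] W) : U →ₗ[ℝ] U' :=
  LinearMap.codRestrict U'
    ((P' : X →ₗ[ℝ] X) ∘ₗ (U.subtype + W.subtype ∘ₗ (L : U →ₗ[ℝ] W)))
    (fun u => hP'r ▸ LinearMap.mem_range_self _ _)

/-- **Analyticity data of the overlap maps of the Grassmannian charts.**
Let `X` be a Banach space with two decompositions `X = U ⊕ W = U' ⊕ W'` into closed
subspaces, let `P'` be the continuous projection onto `U'` along `W'`, and let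
`L ∈ 𝓛(U,W)` be such that `X = G(L) ⊕ W'`.  Then `T := P_{U'⊕W'} ∘ (id + L) : U → U'`
is a continuous linear bijection, and the chart value
`Ψ_{U'⊕W'}(G(L)) = P_{W'⊕U'}|_{G(L)} ∘ (P_{U'⊕W'}|_{G(L)})⁻¹ ∈ 𝓛(U',W')` (characterized
by `M (P' x) = x - P' x` for `x ∈ G(L)`) satisfies `M (T u) = (u + L u) - P' (u + L u)`
for all `u ∈ U`; that is, `Ψ_{U'⊕W'}(G(L)) = P_{W'⊕U'} ∘ (id + L) ∘ (P_{U'⊕W'} ∘ (id + L))⁻¹`. -/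
theorem overlap_map_formula
    {X : Type*} [NormedAddCommGroup X] [NormedSpace ℝ X] [CompleteSpace X]
    (U W U' W' : Submodule ℝ X)
    (hU : IsClosed (U : Set X)) (hW : IsClosed (W : Set X))
    (hU' : IsClosed (U' : Set X)) (hW' : IsClosed (W' : Set X))
    (hUW : IsCompl U W) (hU'W' : IsCompl U' W')
    (P' : X →L[ℝ] X) (hP'1 : P' ∘L P' = P')
    (hP'r : LinearMap.range (P' : X →ₗ[ℝ] X) = U')
    (hP'k : LinearMap.ker (P' : X →ₗ[ℝ] X) = W')
    (L : U →L[ℝ] W) (hGL : IsCompl (graphSub U W L) W') :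
    Continuous (overlapT U W U' P' hP'r L) ∧
    Function.Bijective (overlapT U W U' P' hP'r L) ∧
    ∀ M : U' →L[ℝ] W',
      (∀ x ∈ graphSub U W L,
        (M ⟨P' x, hP'r ▸ LinearMap.mem_range_self _ x⟩ : X) = x - P' x) →
      ∀ u : U,
        (M (overlapT U W U' P' hP'r L u) : X)
          = ((u : X) + (L u : X)) - P' ((u : X) + (L u : X)) := by

  have hfix : ∀ x : X, P' (P' x) = P' x := fun x => DFunLike.congr_fun hP'1 x
  have hcoe : ∀ u : U, (overlapT U W U' P' hP'r L u : X) = P' ((u:X) + (L u : X)) :=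
    fun u => rfl
  refine ⟨?_, ⟨?_, ?_⟩, ?_⟩
  · apply continuous_induced_rng.mpr
    have h : (Subtype.val ∘ fun u => overlapT U W U' P' hP'r L u)
        = fun u : U => P' ((u:X) + (L u : X)) := rfl
    rw [h]
    exact P'.continuous.comp (continuous_subtype_val.add
      (continuous_subtype_val.comp L.continuous))
  · intro u₁ u₂ h
    have h0 : overlapT U W U' P' hP'r L (u₁ - u₂) = 0 := by
      rw [map_sub, h, sub_self]
    set u := u₁ - u₂ with hu
    have hP0 : P' ((u:X) + (L u : X)) = 0 := by
      have := congrArg Subtype.val h0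
      rw [hcoe] at this
      exact this
    have hmem : ((u:X) + (L u : X)) ∈ graphSub U W L := ⟨u, rfl⟩
    have hmemW' : ((u:X) + (L u : X)) ∈ W' := by
      rw [← hP'k]; exact LinearMap.mem_ker.mpr hP0
    have hz : ((u:X) + (L u : X)) = 0 := by
      have := hGL.disjoint.le_bot ⟨hmem, hmemW'⟩
      simpa using this
    have huW : (u:X) ∈ W := by
      have : (u:X) = -(L u : X) := eq_neg_of_add_eq_zero_left hz
      rw [this]; exact W.neg_mem (L u).2
    have : (u:X) = 0 := by
      have := hUW.disjoint.le_bot ⟨u.2, huW⟩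
      simpa using this
    have : u = 0 := Subtype.ext this
    rw [hu] at this
    exact sub_eq_zero.mp this
  · intro u'
    have htop : ((u' : X)) ∈ graphSub U W L ⊔ W' := by
      rw [hGL.codisjoint.eq_top]; trivial
    obtain ⟨g, hg, w, hw, hgw⟩ := Submodule.mem_sup.mp htop
    obtain ⟨u, rfl⟩ := hg
    refine ⟨u, ?_⟩
    apply Subtype.ext
    rw [hcoe]
    have hPw : P' w = 0 := by
      have hm : w ∈ LinearMap.ker (P' : X →ₗ[ℝ] X) := hP'k ▸ hw
      exact hm
    have hPu' : P' (u' : X) = (u' : X) := by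
      have hm : (u' : X) ∈ LinearMap.range (P' : X →ₗ[ℝ] X) := hP'r ▸ u'.2
      obtain ⟨y, hy⟩ := hm
      rw [← hy]; exact hfix y
    have : P' (((U.subtype + W.subtype ∘ₗ (L : U →ₗ[ℝ] W)) u) + w) = (u' : X) := by
      rw [hgw, hPu']
    rw [map_add, hPw, add_zero] at this
    exact this
  · intro M hM u
    have hx : ((u:X) + (L u : X)) ∈ graphSub U W L := ⟨u, rfl⟩
    exact hM _ hx
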